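/- Let G be a graph, A ⊆ V(G), and suppose A_1,…,A_k is a partition of A such that each A_i is a module of G \ (A \ A_i), with B_i = N_G(A_i) \ A nonempty for each i. If u ∈ A and v ∉ A lie in the same connected component of G, then there exists a u–v path of length exactly d_G(u,A_i) + 1 + d_G(B_i,v) for every i with B_i ≠ ∅ such that these distances are finite; consequently d_G(u,v) ≤ d_G(u,A_i) + 1 + d_G(B_i,v). -/

import Mathlib

open scoped Classical

/-- `setEDist G u S` is the distance in `G` from the vertex `u` to the set `S`,
namely `min_{s ∈ S} d_G(u,s)`, with value `⊤` (i.e. `+∞`) when `S = ∅`. -/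
noncomputable def setEDist {V : Type*} (G : SimpleGraph V) (u : V) (S : Set V) : ℕ∞ :=
  ⨅ s ∈ S, G.edist u s

namespace SimpleGraph

variable {V : Type*} {G : SimpleGraph V}

lemma exists_mem_edist_eq_setEDist {u : V} {S : Set V} (h : setEDist G u S ≠ ⊤) :
    ∃ s ∈ S, G.edist u s = setEDist G u S := by
  have hS : Nonempty S := by
    by_contra hS
    simp_all [setEDist]
  obtain ⟨⟨s, hs⟩, hs'⟩ := ciInf_mem fun s : S => G.edist u s
  exact ⟨s, hs, by rw [setEDist, iInf_subtype', ← hs']⟩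

lemma exists_walk_length_eq_edist_add_one_add_edist {u v a b : V} (hab : G.Adj a b)
    (hua : G.edist u a ≠ ⊤) (hvb : G.edist v b ≠ ⊤) :
    ∃ p : G.Walk u v, (p.length : ℕ∞) = G.edist u a + 1 + G.edist v b := by
  obtain ⟨p, hp⟩ := exists_walk_of_edist_ne_top hua
  obtain ⟨q, hq⟩ := exists_walk_of_edist_ne_top hvb
  refine ⟨p.append (.cons hab q.reverse), ?_⟩
  rw [← hp, ← hq, Walk.length_append, Walk.length_cons, Walk.length_reverse]
  push_cast
  ring

end SimpleGraph

theorem exists_path_through_join {V : Type*} (G : SimpleGraph V)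
    (A : Set V) (k : ℕ) (Apart : Fin k → Set V)
    (hmod : ∀ i, ∀ u ∈ Apart i, ∀ v ∈ Apart i, ∀ x ∉ A, (G.Adj u x ↔ G.Adj v x))
    (B : Fin k → Set V) (hB : ∀ i, B i = {x | x ∉ A ∧ ∃ a ∈ Apart i, G.Adj a x})
    (u v : V) :
    ∀ i : Fin k, (B i).Nonempty →
      setEDist G u (Apart i) ≠ ⊤ → setEDist G v (B i) ≠ ⊤ →
      (∃ p : G.Walk u v,
          (p.length : ℕ∞) = setEDist G u (Apart i) + 1 + setEDist G v (B i)) ∧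
        G.edist u v ≤ setEDist G u (Apart i) + 1 + setEDist G v (B i) := by
  intro i _ hua hvb
  obtain ⟨a, ha, hua'⟩ := SimpleGraph.exists_mem_edist_eq_setEDist hua
  obtain ⟨b, hb, hvb'⟩ := SimpleGraph.exists_mem_edist_eq_setEDist hvb
  rw [hB i] at hb
  obtain ⟨hbA, a', ha', ha'b⟩ := hb
  have hab : G.Adj a b := (hmod i a' ha' a ha b hbA).mp ha'b
  obtain ⟨p, hp⟩ := SimpleGraph.exists_walk_length_eq_edist_add_one_add_edist hab
    (by rwa [hua']) (by rwa [hvb'])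
  rw [← hua', ← hvb']
  exact ⟨⟨p, hp⟩, hp ▸ SimpleGraph.edist_le p⟩
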